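/- Let H_S be a Hermitian d×d complex matrix and H_SE a Hermitian operator on ℂ^d ⊗ ℂ^D. Suppose there exist unitary d×d matrices V_1, …, V_m and positive rational weights p_1, …, p_m with Σ_j p_j = 1 defining the mixed unitary channel Φ(X) := Σ_j p_j V_j X V_j†, such that: (i) Φ(H_S) is not a scalar multiple of the identity; (ii) for every unit vector ψ ∈ ℂ^D, Tr[(Φ(H_S) − (Tr H_S / d)·1_d) · Φ(⟨ψ|H_SE|ψ⟩_E)] = 0; and (iii) there exists an orthonormal eigenbasis {v_i} of Φ(H_S) such that for every unit vector ψ ∈ ℂ^D the diagonal entries ⟨v_i, Φ(⟨ψ|H_SE|ψ⟩_E) v_i⟩ are all equal (with common value possibly depending on ψ). Then there exist N ∈ ℕ, N ≥ 1, and unitary d×d matrices U_0, …, U_{N−1} such that (1/N) Σ_{k=0}^{N−1} U_k H_S U_k† is not a scalar multiple of the identity and (1/N) Σ_{k=0}^{N−1} (U_k ⊗ 1_D) H_SE (U_k† ⊗ 1_D) = 1_d ⊗ J for some Hermitian D×D matrix J. -/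
import Mathlib


open Matrix Complex
open scoped Kronecker

/-- The partial expectation `⟨ψ|X|ψ⟩_E` of an operator `X` on `ℂ^d ⊗ ℂ^D`
with respect to an environment vector `ψ ∈ ℂ^D`. -/
noncomputable def pexp {d D : ℕ} (X : Matrix (Fin d × Fin D) (Fin d × Fin D) ℂ)
    (ψ : Fin D → ℂ) : Matrix (Fin d) (Fin d) ℂ :=
  fun i j => ∑ a, ∑ b, star (ψ a) * X (i, a) (j, b) * ψ b

/-- A mixed unitary channel `X ↦ Σ_j p_j V_j X V_j†` with rational weights. -/
noncomputable def mixChanW {d m : ℕ} (p : Fin m → ℚ) (V : Fin m → Matrix (Fin d) (Fin d) ℂ)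
    (X : Matrix (Fin d) (Fin d) ℂ) : Matrix (Fin d) (Fin d) ℂ :=
  ∑ j, ((p j : ℂ)) • (V j * X * (V j)ᴴ)

/-- The equal-weight mixed unitary channel `X ↦ (1/N) Σ_k U_k X U_k†`. -/
noncomputable def mixChan {d N : ℕ} (U : Fin N → Matrix (Fin d) (Fin d) ℂ)
    (X : Matrix (Fin d) (Fin d) ℂ) : Matrix (Fin d) (Fin d) ℂ :=
  ((N : ℂ))⁻¹ • ∑ k, U k * X * (U k)ᴴ

/-- The channel `X ↦ (1/N) Σ_k (U_k ⊗ 1_D) X (U_k† ⊗ 1_D)` on the joint system. -/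
noncomputable def mixChanE {d D N : ℕ} (U : Fin N → Matrix (Fin d) (Fin d) ℂ)
    (X : Matrix (Fin d × Fin D) (Fin d × Fin D) ℂ) :
    Matrix (Fin d × Fin D) (Fin d × Fin D) ℂ :=
  ((N : ℂ))⁻¹ • ∑ k, (U k ⊗ₖ (1 : Matrix (Fin D) (Fin D) ℂ)) * X *
    ((U k)ᴴ ⊗ₖ (1 : Matrix (Fin D) (Fin D) ℂ))

namespace Stmt1Aux

noncomputable def Dk (d : ℕ) (k : Fin d) : Matrix (Fin d) (Fin d) ℂ :=
  Matrix.diagonal (fun i : Fin d => Complex.exp (2 * Real.pi * Complex.I / d) ^ ((k:ℕ) * (i:ℕ)))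

lemma zeta_unit (d : ℕ) : Complex.exp (2 * Real.pi * Complex.I / d) *
    (starRingEnd ℂ) (Complex.exp (2 * Real.pi * Complex.I / d)) = 1 := by
  have hre : (2 * Real.pi * Complex.I / d).re = 0 := by
    simp [Complex.div_re]
  rw [Complex.mul_conj, Complex.normSq_eq_norm_sq, Complex.norm_exp, hre]
  norm_num

lemma Dk_unitary (d : ℕ) (k : Fin d) : Dk d k * (Dk d k)ᴴ = 1 := by
  rw [Dk, Matrix.diagonal_conjTranspose, Matrix.diagonal_mul_diagonal]
  ext i j
  rcases eq_or_ne i j with h | h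
  · subst h
    rw [Matrix.diagonal_apply_eq, Matrix.one_apply_eq, Pi.star_apply, RCLike.star_def, map_pow,
      ← mul_pow, zeta_unit, one_pow]
  · rw [Matrix.diagonal_apply_ne _ h, Matrix.one_apply_ne h]

lemma dephase_sum (d : ℕ) (hd : 0 < d) (i j : Fin d) :
    ∑ k : Fin d, (Complex.exp (2 * Real.pi * Complex.I / d)) ^ ((k:ℕ) * (i:ℕ)) *
      (starRingEnd ℂ) ((Complex.exp (2 * Real.pi * Complex.I / d)) ^ ((k:ℕ) * (j:ℕ)))
      = if i = j then (d:ℂ) else 0 := by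
  set ζ := Complex.exp (2 * Real.pi * Complex.I / d) with hζ
  have hprim : IsPrimitiveRoot ζ d := Complex.isPrimitiveRoot_exp d hd.ne'
  have hζ0 : ζ ≠ 0 := Complex.exp_ne_zero _
  have hstar : (starRingEnd ℂ) ζ = ζ⁻¹ := by
    rw [hζ, ← Complex.exp_conj, ← Complex.exp_neg]
    congr 1
    simp [map_div₀, Complex.conj_I]
    ring_nf
    simp [Complex.conj_ofNat]
    ring
  set u : ℂ := ζ ^ ((i:ℤ) - (j:ℤ)) with hu
  have key : ∀ k : ℕ, ζ ^ (k * (i:ℕ)) * (starRingEnd ℂ) (ζ ^ (k * (j:ℕ))) = u ^ k := by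
    intro k
    rw [map_pow, hstar, hu, ← zpow_natCast ζ, ← zpow_natCast ζ⁻¹, _root_.inv_zpow _ _,
      ← _root_.zpow_neg _ _, ← zpow_add₀ hζ0, ← zpow_natCast (ζ ^ _), ← _root_.zpow_mul]
    congr 1
    push_cast
    ring
  simp_rw [key]
  rw [Fin.sum_univ_eq_sum_range]
  by_cases h : i = j
  · simp [h, hu]
  · have hij : ¬ ((d:ℤ) ∣ ((i:ℤ) - (j:ℤ))) := by
      rw [dvd_iff_exists_eq_mul_left]
      rintro ⟨c, hc⟩
      have h1 : (i:ℤ) < d := by exact_mod_cast i.2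
      have h2 : (j:ℤ) < d := by exact_mod_cast j.2
      have h3 : (0:ℤ) ≤ i := by positivity
      have h4 : (0:ℤ) ≤ j := by positivity
      have : c = 0 := by nlinarith [Int.le_of_lt h1]
      subst this
      simp at hc
      apply h
      omega
    have hu1 : u ≠ 1 := by
      rw [hu, Ne, hprim.zpow_eq_one_iff_dvd]
      exact hij
    have hud : u ^ (d:ℕ) = 1 := by
      rw [hu, ← zpow_natCast, ← _root_.zpow_mul, mul_comm, _root_.zpow_mul, zpow_natCast,
        hprim.pow_eq_one, _root_.one_zpow _]
    rw [geom_sum_eq hu1, hud]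
    simp [h]

lemma dephase (d : ℕ) (hd : 0 < d) (M : Matrix (Fin d) (Fin d) ℂ) :
    ∑ k : Fin d, Dk d k * M * (Dk d k)ᴴ
      = (d:ℂ) • Matrix.diagonal (fun i => M i i) := by
  ext i j
  rw [Matrix.sum_apply]
  have hterm : ∀ k : Fin d, (Dk d k * M * (Dk d k)ᴴ) i j
      = (Complex.exp (2 * Real.pi * Complex.I / d)) ^ ((k:ℕ) * (i:ℕ)) *
        (starRingEnd ℂ) ((Complex.exp (2 * Real.pi * Complex.I / d)) ^ ((k:ℕ) * (j:ℕ))) * M i j := by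
    intro k
    rw [Dk, Matrix.diagonal_conjTranspose, Matrix.mul_diagonal, Matrix.diagonal_mul]
    simp only [Pi.star_apply, RCLike.star_def]
    ring
  simp_rw [hterm, ← Finset.sum_mul, dephase_sum d hd i j]
  by_cases h : i = j <;> simp [h, Matrix.diagonal_apply, Matrix.smul_apply]

lemma unit_mul {d : ℕ} {A B : Matrix (Fin d) (Fin d) ℂ} (hA : A * Aᴴ = 1) (hB : B * Bᴴ = 1) :
    (A * B) * (A * B)ᴴ = 1 := by
  rw [Matrix.conjTranspose_mul, mul_assoc, ← mul_assoc B, hB, one_mul, hA]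

/-- conjugation as a linear map -/
noncomputable def cj {d : ℕ} (A B : Matrix (Fin d) (Fin d) ℂ) :
    Matrix (Fin d) (Fin d) ℂ →ₗ[ℂ] Matrix (Fin d) (Fin d) ℂ where
  toFun M := A * M * B
  map_add' X Y := by
    show A * (X + Y) * B = A * X * B + A * Y * B
    rw [Matrix.mul_add, Matrix.add_mul]
  map_smul' c X := by
    show A * (c • X) * B = c • (A * X * B)
    rw [Matrix.mul_smul, Matrix.smul_mul]

@[simp] lemma cj_apply {d : ℕ} (A B M : Matrix (Fin d) (Fin d) ℂ) :
    cj A B M = A * M * B := rfl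

lemma diagonal_const {d : ℕ} (c : ℂ) :
    Matrix.diagonal (fun _ : Fin d => c) = c • (1 : Matrix (Fin d) (Fin d) ℂ) := by
  ext i j
  rcases eq_or_ne i j with h | h
  · subst h; simp
  · simp [Matrix.diagonal_apply_ne _ h, Matrix.one_apply_ne h]

lemma mixChan_add {d N : ℕ} (U : Fin N → Matrix (Fin d) (Fin d) ℂ)
    (X Y : Matrix (Fin d) (Fin d) ℂ) :
    mixChan U (X + Y) = mixChan U X + mixChan U Y := by
  simp [mixChan, Matrix.mul_add, Matrix.add_mul, Finset.sum_add_distrib, smul_add]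

lemma mixChan_smul {d N : ℕ} (U : Fin N → Matrix (Fin d) (Fin d) ℂ)
    (c : ℂ) (X : Matrix (Fin d) (Fin d) ℂ) :
    mixChan U (c • X) = c • mixChan U X := by
  simp only [mixChan, Matrix.mul_smul, Matrix.smul_mul]
  rw [← Finset.smul_sum, smul_comm]

lemma mixChan_star {d N : ℕ} (U : Fin N → Matrix (Fin d) (Fin d) ℂ)
    (X : Matrix (Fin d) (Fin d) ℂ) :
    mixChan U (Xᴴ) = (mixChan U X)ᴴ := by
  simp only [mixChan, Matrix.conjTranspose_smul, Matrix.conjTranspose_sum,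
    Matrix.conjTranspose_mul, Matrix.conjTranspose_conjTranspose, mul_assoc]
  congr 1
  rw [star_inv₀, star_natCast]

lemma single_unit {D : ℕ} (a : Fin D) :
    star (Pi.single a (1:ℂ)) ⬝ᵥ Pi.single a (1:ℂ) = 1 := by
  simp [dotProduct, Pi.single_apply, apply_ite (star : ℂ → ℂ), ite_mul, mul_ite]

lemma pair_norm {D : ℕ} (a b : Fin D) (hab : a ≠ b) (c2 : ℂ) (hc2 : star c2 * c2 = 1) :
    star ((Pi.single a 1 : Fin D → ℂ) + c2 • (Pi.single b 1 : Fin D → ℂ)) ⬝ᵥ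
      ((Pi.single a 1 : Fin D → ℂ) + c2 • (Pi.single b 1 : Fin D → ℂ)) = 2 := by
  simp only [dotProduct, Pi.add_apply, Pi.smul_apply, Pi.star_apply, Pi.single_apply,
    star_add, star_mul', smul_eq_mul, apply_ite (star : ℂ → ℂ), star_one, star_zero,
    add_mul, mul_add, ite_mul, mul_ite, mul_zero, zero_mul, mul_one, one_mul,
    Finset.sum_add_distrib, Finset.sum_ite_eq', Finset.mem_univ, if_true]
  rw [if_neg hab, if_neg (Ne.symm hab), hc2]
  norm_num

lemma smul_unit {D : ℕ} (c : ℂ) (ψ : Fin D → ℂ) :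
    star (c • ψ) ⬝ᵥ (c • ψ) = (star c * c) * (star ψ ⬝ᵥ ψ) := by
  rw [star_smul, smul_dotProduct, dotProduct_smul, smul_eq_mul, smul_eq_mul]
  ring

lemma pexp_smul {d D : ℕ} (X : Matrix (Fin d × Fin D) (Fin d × Fin D) ℂ)
    (c : ℂ) (ψ : Fin D → ℂ) :
    pexp X (c • ψ) = (star c * c) • pexp X ψ := by
  ext i j
  simp only [pexp, Matrix.smul_apply, Pi.smul_apply, smul_eq_mul, star_mul',
    Finset.mul_sum]
  refine Finset.sum_congr rfl (fun x _ => ?_)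
  refine Finset.sum_congr rfl (fun y _ => ?_)
  ring

lemma pexp_single {d D : ℕ} (X : Matrix (Fin d × Fin D) (Fin d × Fin D) ℂ) (a : Fin D) :
    pexp X (Pi.single a 1) = Matrix.of (fun i j => X (i, a) (j, a)) := by
  ext i j
  simp [pexp, Pi.single_apply, apply_ite (star : ℂ → ℂ), ite_mul, mul_ite, mul_zero,
    zero_mul, Finset.sum_ite_eq', Finset.mem_univ]

lemma pexp_pair {d D : ℕ} (X : Matrix (Fin d × Fin D) (Fin d × Fin D) ℂ)
    (a b : Fin D) (hab : a ≠ b) (c2 : ℂ) :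
    pexp X ((Pi.single a 1 : Fin D → ℂ) + c2 • (Pi.single b 1 : Fin D → ℂ))
      = Matrix.of (fun i j => X (i,a) (j,a)) + c2 • Matrix.of (fun i j => X (i,a) (j,b))
        + star c2 • Matrix.of (fun i j => X (i,b) (j,a))
        + (star c2 * c2) • Matrix.of (fun i j => X (i,b) (j,b)) := by
  ext i j
  simp only [pexp, Matrix.add_apply, Matrix.smul_apply, Matrix.of_apply, Pi.add_apply,
    Pi.smul_apply, Pi.single_apply, smul_eq_mul, star_add, star_mul',
    apply_ite (star : ℂ → ℂ), star_one, star_zero, add_mul, mul_add, ite_mul, mul_ite,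
    mul_zero, zero_mul, mul_one, one_mul, Finset.sum_add_distrib, Finset.sum_ite_eq',
    Finset.mem_univ, if_true]
  ring

lemma mixChanE_block {d D N : ℕ} (U : Fin N → Matrix (Fin d) (Fin d) ℂ)
    (X : Matrix (Fin d × Fin D) (Fin d × Fin D) ℂ) (a b : Fin D) :
    Matrix.of (fun i j => mixChanE U X (i,a) (j,b))
      = mixChan U (Matrix.of (fun i j => X (i,a) (j,b))) := by
  ext i j
  simp only [mixChanE, mixChan, Matrix.smul_apply, Matrix.sum_apply, Matrix.of_apply]
  congr 1
  refine Finset.sum_congr rfl (fun k _ => ?_)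
  simp only [Matrix.mul_apply, Fintype.sum_prod_type, Matrix.kroneckerMap_apply,
    Matrix.one_apply, Matrix.of_apply, mul_ite, ite_mul, mul_zero, zero_mul, mul_one,
    one_mul, Finset.sum_ite_eq', Finset.mem_univ, if_true, Finset.sum_ite_eq]

end Stmt1Aux

theorem stmt_1 {d D m : ℕ} (hd : 0 < d)
    (HS : Matrix (Fin d) (Fin d) ℂ) (hHS : HS.IsHermitian)
    (HSE : Matrix (Fin d × Fin D) (Fin d × Fin D) ℂ) (hHSE : HSE.IsHermitian)
    (p : Fin m → ℚ) (hp : ∀ j, 0 < p j) (hpsum : ∑ j, p j = 1)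
    (V : Fin m → Matrix (Fin d) (Fin d) ℂ) (hV : ∀ j, V j * (V j)ᴴ = 1)
    -- (i) Φ(H_S) is not a scalar multiple of the identity
    (hi : ¬ ∃ c : ℂ, mixChanW p V HS = c • (1 : Matrix (Fin d) (Fin d) ℂ))
    -- (ii) the orthogonality condition for every unit vector ψ
    (hii : ∀ ψ : Fin D → ℂ, star ψ ⬝ᵥ ψ = 1 →
      Matrix.trace ((mixChanW p V HS - (HS.trace / (d : ℂ)) • (1 : Matrix (Fin d) (Fin d) ℂ)) *
        mixChanW p V (pexp HSE ψ)) = 0)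
    -- (iii) an orthonormal eigenbasis of Φ(H_S) with constant diagonal entries
    (hiii : ∃ v : Fin d → (Fin d → ℂ),
      (∀ i j, star (v i) ⬝ᵥ v j = if i = j then (1 : ℂ) else 0) ∧
      (∀ i, ∃ μ : ℝ, (mixChanW p V HS).mulVec (v i) = (μ : ℂ) • v i) ∧
      (∀ ψ : Fin D → ℂ, star ψ ⬝ᵥ ψ = 1 →
        ∀ i j, star (v i) ⬝ᵥ (mixChanW p V (pexp HSE ψ)).mulVec (v i) =
          star (v j) ⬝ᵥ (mixChanW p V (pexp HSE ψ)).mulVec (v j))) :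
    ∃ (N : ℕ), 1 ≤ N ∧ ∃ U : Fin N → Matrix (Fin d) (Fin d) ℂ,
      (∀ k, U k * (U k)ᴴ = 1) ∧
      (¬ ∃ c : ℂ, mixChan U HS = c • (1 : Matrix (Fin d) (Fin d) ℂ)) ∧
      (∃ J : Matrix (Fin D) (Fin D) ℂ, J.IsHermitian ∧
        mixChanE U HSE = (1 : Matrix (Fin d) (Fin d) ℂ) ⊗ₖ J) := by
  classical
  obtain ⟨v, hortho, heig, hdiag⟩ := hiii
  set T : Matrix (Fin d) (Fin d) ℂ := Matrix.of (fun i j => v j i) with hTdef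
  have hT1 : Tᴴ * T = 1 := by
    ext i j
    have h := hortho i j
    simpa [Matrix.mul_apply, Matrix.conjTranspose_apply, dotProduct, Matrix.one_apply,
      hTdef] using h
  have hT2 : T * Tᴴ = 1 := mul_eq_one_comm.mp hT1
  set L : ℕ := ∏ j, (p j).den with hLdef
  have hL0 : 0 < L := Finset.prod_pos (fun j _ => (p j).pos)
  set n : Fin m → ℕ := fun j => ((p j).num * ∏ k ∈ Finset.univ.erase j, ((p k).den : ℤ)).toNat
    with hndef
  have hnQ : ∀ j, (n j : ℚ) = p j * L := by
    intro j
    have hnn : (0:ℤ) ≤ (p j).num * ∏ k ∈ Finset.univ.erase j, ((p k).den : ℤ) := by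
      have h1 : (0:ℤ) ≤ (p j).num := le_of_lt (Rat.num_pos.mpr (hp j))
      have h2 : (0:ℤ) ≤ ∏ k ∈ Finset.univ.erase j, ((p k).den : ℤ) :=
        Finset.prod_nonneg (fun k _ => by positivity)
      exact mul_nonneg h1 h2
    have hcast : ((n j : ℤ) : ℚ) =
        (((p j).num * ∏ k ∈ Finset.univ.erase j, ((p k).den : ℤ)) : ℚ) := by
      rw [hndef]
      exact_mod_cast congrArg (fun z : ℤ => (z : ℚ)) (Int.toNat_of_nonneg hnn)
    have hL : (L : ℚ) = (p j).den * ∏ k ∈ Finset.univ.erase j, ((p k).den : ℚ) := by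
      rw [hLdef]
      push_cast
      exact (Finset.mul_prod_erase Finset.univ (fun k => ((p k).den : ℚ))
        (Finset.mem_univ j)).symm
    have hmd : p j * (p j).den = (p j).num := by exact_mod_cast Rat.mul_den_eq_num (p j)
    push_cast at hcast ⊢
    rw [hcast, hL, ← mul_assoc, hmd]
  have hsum_n : ∑ j, n j = L := by
    have h : ((∑ j, n j : ℕ) : ℚ) = L := by
      push_cast
      calc ∑ j, (n j : ℚ) = ∑ j, p j * L := Finset.sum_congr rfl (fun j _ => hnQ j)
        _ = (∑ j, p j) * L := by rw [Finset.sum_mul]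
        _ = L := by rw [hpsum, one_mul]
    exact_mod_cast h
  set N : ℕ := d * L with hNdef
  have hN1 : 1 ≤ N := by
    have : 0 < N := by rw [hNdef]; positivity
    omega
  have hcard : Fintype.card (Fin d × (j : Fin m) × Fin (n j)) = N := by
    simp [Fintype.card_sigma, hsum_n, hNdef]
  let e : (Fin d × (j : Fin m) × Fin (n j)) ≃ Fin N := Fintype.equivFinOfCardEq hcard
  set Uf : (Fin d × (j : Fin m) × Fin (n j)) → Matrix (Fin d) (Fin d) ℂ :=
    fun s => T * Stmt1Aux.Dk d s.1 * Tᴴ * V s.2.1 with hUfdef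
  set U : Fin N → Matrix (Fin d) (Fin d) ℂ := fun t => Uf (e.symm t) with hUdef
  have hUunit : ∀ k, U k * (U k)ᴴ = 1 := by
    intro k
    refine Stmt1Aux.unit_mul (Stmt1Aux.unit_mul (Stmt1Aux.unit_mul hT2 ?_) ?_) (hV _)
    · exact Stmt1Aux.Dk_unitary d _
    · rw [Matrix.conjTranspose_conjTranspose]
      exact hT1
  have hmix : ∀ X : Matrix (Fin d) (Fin d) ℂ,
      mixChan U X = T * Matrix.diagonal (fun i => (Tᴴ * mixChanW p V X * T) i i) * Tᴴ := by
    intro X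
    have h1 : ∑ t : Fin N, U t * X * (U t)ᴴ
        = ∑ s : Fin d × (j : Fin m) × Fin (n j), Uf s * X * (Uf s)ᴴ := by
      rw [hUdef]
      exact Equiv.sum_comp e.symm (fun s => Uf s * X * (Uf s)ᴴ)
    have hk : ∀ k : Fin d, ∑ s : (j : Fin m) × Fin (n j), Uf (k, s) * X * (Uf (k, s))ᴴ
        = Stmt1Aux.cj T Tᴴ
            (Stmt1Aux.Dk d k * ((L:ℂ) • (Tᴴ * mixChanW p V X * T)) * (Stmt1Aux.Dk d k)ᴴ) := by
      intro k
      rw [← Finset.univ_sigma_univ, Finset.sum_sigma]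
      have h3 : ∀ (j : Fin m) (r : Fin (n j)),
          Uf (k, ⟨j, r⟩) * X * (Uf (k, ⟨j, r⟩))ᴴ
          = Stmt1Aux.cj (T * Stmt1Aux.Dk d k) ((Stmt1Aux.Dk d k)ᴴ * Tᴴ)
              (Tᴴ * (V j * X * (V j)ᴴ) * T) := by
        intro j r
        simp only [hUfdef, Stmt1Aux.cj_apply, Matrix.conjTranspose_mul,
          Matrix.conjTranspose_conjTranspose, mul_assoc]
      simp only [h3]
      have h4 : ∀ j : Fin m,
          ∑ _r : Fin (n j), Stmt1Aux.cj (T * Stmt1Aux.Dk d k) ((Stmt1Aux.Dk d k)ᴴ * Tᴴ)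
              (Tᴴ * (V j * X * (V j)ᴴ) * T)
          = Stmt1Aux.cj (T * Stmt1Aux.Dk d k) ((Stmt1Aux.Dk d k)ᴴ * Tᴴ)
              ((n j : ℂ) • (Tᴴ * (V j * X * (V j)ᴴ) * T)) := by
        intro j
        rw [Finset.sum_const, Finset.card_univ, Fintype.card_fin,
          ← Nat.cast_smul_eq_nsmul ℂ, _root_.map_smul]
      simp only [h4]
      rw [← _root_.map_sum]
      have h5 : ∑ j, (n j : ℂ) • (Tᴴ * (V j * X * (V j)ᴴ) * T)
          = (L:ℂ) • (Tᴴ * mixChanW p V X * T) := by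
        have h6 : ∀ j : Fin m, (n j : ℂ) • (Tᴴ * (V j * X * (V j)ᴴ) * T)
            = Stmt1Aux.cj Tᴴ T ((n j : ℂ) • (V j * X * (V j)ᴴ)) := by
          intro j
          rw [_root_.map_smul, Stmt1Aux.cj_apply]
        simp only [h6]
        rw [← _root_.map_sum]
        have h7 : ∑ j, (n j : ℂ) • (V j * X * (V j)ᴴ) = (L:ℂ) • mixChanW p V X := by
          rw [mixChanW, Finset.smul_sum]
          refine Finset.sum_congr rfl (fun j _ => ?_)
          rw [smul_smul]
          congr 1
          have hq : ((n j : ℚ) : ℂ) = ((p j * L : ℚ) : ℂ) :=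
            congrArg (fun q : ℚ => (q : ℂ)) (hnQ j)
          push_cast at hq
          rw [hq, mul_comm]
        rw [h7, _root_.map_smul, Stmt1Aux.cj_apply]
      rw [h5]
      simp only [Stmt1Aux.cj_apply, mul_assoc]
    rw [mixChan, h1, Fintype.sum_prod_type]
    simp only [hk]
    rw [← _root_.map_sum]
    have h8 : ∑ k : Fin d,
        Stmt1Aux.Dk d k * ((L:ℂ) • (Tᴴ * mixChanW p V X * T)) * (Stmt1Aux.Dk d k)ᴴ
        = ((d:ℂ) * (L:ℂ)) • Matrix.diagonal (fun i => (Tᴴ * mixChanW p V X * T) i i) := by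
      rw [Stmt1Aux.dephase d hd]
      have h9 : Matrix.diagonal (fun i => ((L:ℂ) • (Tᴴ * mixChanW p V X * T)) i i)
          = (L:ℂ) • Matrix.diagonal (fun i => (Tᴴ * mixChanW p V X * T) i i) := by
        ext i1 j1
        rcases eq_or_ne i1 j1 with h | h
        · subst h
          simp [Matrix.diagonal_apply_eq, Matrix.smul_apply]
        · simp [Matrix.diagonal_apply_ne _ h, Matrix.smul_apply]
      rw [h9, smul_smul]
    rw [h8, _root_.map_smul, smul_smul, Stmt1Aux.cj_apply]
    have h10 : (N:ℂ)⁻¹ * ((d:ℂ) * (L:ℂ)) = 1 := by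
      have hd0 : (d:ℂ) ≠ 0 := Nat.cast_ne_zero.mpr hd.ne'
      have hl0 : (L:ℂ) ≠ 0 := Nat.cast_ne_zero.mpr hL0.ne'
      rw [hNdef]
      push_cast
      exact inv_mul_cancel₀ (mul_ne_zero hd0 hl0)
    rw [h10, one_smul]
  -- entry formula through the basis
  have hent : ∀ (A : Matrix (Fin d) (Fin d) ℂ) (i j : Fin d),
      (Tᴴ * A * T) i j = star (v i) ⬝ᵥ A.mulVec (v j) := by
    intro A i j
    simp only [Matrix.mul_apply, Matrix.conjTranspose_apply, hTdef, Matrix.of_apply,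
      dotProduct, Matrix.mulVec, Pi.star_apply, Finset.sum_mul, Finset.mul_sum]
    rw [Finset.sum_comm]
    exact Finset.sum_congr rfl (fun x _ => Finset.sum_congr rfl (fun y _ => by ring))
  -- Φ(HS) is diagonal in basis v
  have hATdiag : Matrix.diagonal (fun i => (Tᴴ * mixChanW p V HS * T) i i)
      = Tᴴ * mixChanW p V HS * T := by
    ext i j
    rcases eq_or_ne i j with h | h
    · subst h; rw [Matrix.diagonal_apply_eq]
    · rw [Matrix.diagonal_apply_ne _ h, hent]
      obtain ⟨μ, hμ⟩ := heig j
      rw [hμ, dotProduct_smul, hortho i j, if_neg h]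
      simp
  have hchanHS : mixChan U HS = mixChanW p V HS := by
    rw [hmix, hATdiag,
      show T * (Tᴴ * mixChanW p V HS * T) * Tᴴ = (T * Tᴴ) * mixChanW p V HS * (T * Tᴴ) from by
        simp only [mul_assoc], hT2, one_mul, mul_one]
  refine ⟨N, hN1, U, hUunit, ?_, ?_⟩
  · rw [hchanHS]; exact hi
  -- part (b): the environment operator is fully mixed on the system
  set i0 : Fin d := ⟨0, hd⟩ with hi0
  have hsc : ∀ ψ : Fin D → ℂ, star ψ ⬝ᵥ ψ = 1 →
      ∃ c : ℂ, mixChan U (pexp HSE ψ) = c • 1 := by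
    intro ψ hψ
    refine ⟨(Tᴴ * mixChanW p V (pexp HSE ψ) * T) i0 i0, ?_⟩
    rw [hmix]
    have hconst : (fun i => (Tᴴ * mixChanW p V (pexp HSE ψ) * T) i i)
        = fun _ => (Tᴴ * mixChanW p V (pexp HSE ψ) * T) i0 i0 := by
      funext i
      rw [hent, hent]
      exact hdiag ψ hψ i i0
    rw [hconst, Stmt1Aux.diagonal_const]
    simp only [Matrix.mul_smul, Matrix.smul_mul, mul_one, hT2]
  set Gm : Fin D → Fin D → Matrix (Fin d) (Fin d) ℂ :=
    fun a b => mixChan U (Matrix.of (fun i j => HSE (i,a) (j,b))) with hGmdef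
  have hGdiag : ∀ a, ∃ c : ℂ, Gm a a = c • 1 := by
    intro a
    obtain ⟨c, hc⟩ := hsc (Pi.single a 1) (Stmt1Aux.single_unit a)
    rw [Stmt1Aux.pexp_single] at hc
    exact ⟨c, hc⟩
  have hGsc : ∀ a b, ∃ c : ℂ, Gm a b = c • 1 := by
    intro a b
    rcases eq_or_ne a b with rfl | hab
    · exact hGdiag a
    · have key : ∀ c2 : ℂ, star c2 * c2 = 1 → ∃ c : ℂ,
          Gm a a + c2 • Gm a b + star c2 • Gm b a + (star c2 * c2) • Gm b b = c • 1 := by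
        intro c2 hc2
        set ψ : Fin D → ℂ := (Pi.single a 1 : Fin D → ℂ) + c2 • (Pi.single b 1 : Fin D → ℂ) with hψdef
        have hnorm : star ψ ⬝ᵥ ψ = 2 := Stmt1Aux.pair_norm a b hab c2 hc2
        set t : ℂ := (((Real.sqrt 2)⁻¹ : ℝ) : ℂ) with htdef
        have ht : star t * t = 2⁻¹ := by
          rw [htdef, RCLike.star_def, Complex.conj_ofReal, ← Complex.ofReal_mul, ← mul_inv,
            Real.mul_self_sqrt (by norm_num : (0:ℝ) ≤ 2)]
          norm_num
        have hunit : star (t • ψ) ⬝ᵥ (t • ψ) = 1 := by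
          rw [Stmt1Aux.smul_unit, hnorm, ht]
          norm_num
        obtain ⟨c, hc⟩ := hsc _ hunit
        rw [Stmt1Aux.pexp_smul, ht, Stmt1Aux.mixChan_smul] at hc
        have h2 : mixChan U (pexp HSE ψ) = ((2:ℂ) * c) • 1 := by
          have h3 : (2:ℂ) • ((2⁻¹:ℂ) • mixChan U (pexp HSE ψ))
              = (2:ℂ) • (c • (1 : Matrix (Fin d) (Fin d) ℂ)) := by rw [hc]
          rw [smul_smul, smul_smul] at h3
          norm_num at h3
          exact h3
        rw [hψdef, Stmt1Aux.pexp_pair HSE a b hab c2] at h2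
        rw [Stmt1Aux.mixChan_add, Stmt1Aux.mixChan_add, Stmt1Aux.mixChan_add,
          Stmt1Aux.mixChan_smul, Stmt1Aux.mixChan_smul, Stmt1Aux.mixChan_smul] at h2
        exact ⟨2 * c, h2⟩
      obtain ⟨ca, hca⟩ := hGdiag a
      obtain ⟨cb, hcb⟩ := hGdiag b
      obtain ⟨c1, hc1⟩ := key 1 (by norm_num)
      obtain ⟨c2, hc2⟩ := key Complex.I (by simp [Complex.conj_I])
      simp only [star_one, one_smul, one_mul, mul_one] at hc1
      simp only [RCLike.star_def, Complex.conj_I, neg_mul, Complex.I_mul_I, neg_neg,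
        one_smul, neg_smul] at hc2
      have hsum : Gm a b + Gm b a = (c1 - ca - cb) • 1 := by
        calc Gm a b + Gm b a
            = (Gm a a + Gm a b + Gm b a + Gm b b) - Gm a a - Gm b b := by abel
          _ = c1 • 1 - ca • 1 - cb • 1 := by rw [hc1, hca, hcb]
          _ = (c1 - ca - cb) • 1 := by rw [← sub_smul, ← sub_smul]
      have hdif : Complex.I • Gm a b - Complex.I • Gm b a = (c2 - ca - cb) • 1 := by
        calc Complex.I • Gm a b - Complex.I • Gm b a
            = (Gm a a + Complex.I • Gm a b + -(Complex.I • Gm b a) + Gm b b)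
              - Gm a a - Gm b b := by abel
          _ = c2 • 1 - ca • 1 - cb • 1 := by rw [hc2, hca, hcb]
          _ = (c2 - ca - cb) • 1 := by rw [← sub_smul, ← sub_smul]
      refine ⟨2⁻¹ * ((c1 - ca - cb) + -Complex.I * (c2 - ca - cb)), ?_⟩
      have hkey : Gm a b = (2⁻¹ : ℂ) • ((Gm a b + Gm b a)
          + (-Complex.I) • (Complex.I • Gm a b - Complex.I • Gm b a)) := by
        rw [smul_sub, smul_smul, smul_smul, neg_mul, Complex.I_mul_I, neg_neg, one_smul,
          one_smul]
        rw [show Gm a b + Gm b a + (Gm a b - Gm b a) = (2:ℂ) • Gm a b from by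
          rw [two_smul]; abel]
        rw [smul_smul]
        norm_num
      rw [hkey, hsum, hdif, smul_smul, ← add_smul, smul_smul]
  -- assemble J
  have hGm_eq : ∀ a b, Gm a b = mixChan U (Matrix.of (fun i j => HSE (i,a) (j,b))) :=
    fun _ _ => rfl
  have hblock : ∀ (a b : Fin D) (i j : Fin d), mixChanE U HSE (i,a) (j,b) = Gm a b i j := by
    intro a b i j
    calc mixChanE U HSE (i,a) (j,b)
        = Matrix.of (fun i j => mixChanE U HSE (i,a) (j,b)) i j := rfl
      _ = Gm a b i j := by rw [Stmt1Aux.mixChanE_block U HSE a b, ← hGm_eq]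
  rcases Nat.eq_zero_or_pos D with hD0 | hD0
  · refine ⟨0, Matrix.isHermitian_zero, ?_⟩
    ext ⟨i, a⟩ ⟨j, b⟩
    exact absurd a.2 (by omega)
  · refine ⟨Matrix.of (fun a b => Gm a b i0 i0), ?_, ?_⟩
    · have hGstar : ∀ a b, Gm b a = (Gm a b)ᴴ := by
        intro a b
        have hof : (Matrix.of (fun i j => HSE (i,b) (j,a)))
            = (Matrix.of (fun i j => HSE (i,a) (j,b)) :
                Matrix (Fin d) (Fin d) ℂ)ᴴ := by
          ext i j
          simp only [Matrix.conjTranspose_apply, Matrix.of_apply]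
          exact (congrFun (congrFun hHSE (i,b)) (j,a)).symm
        rw [hGm_eq, hGm_eq, hof, Stmt1Aux.mixChan_star]
      show (Matrix.of (fun a b => Gm a b i0 i0))ᴴ = Matrix.of (fun a b => Gm a b i0 i0)
      ext a b
      rw [Matrix.conjTranspose_apply, Matrix.of_apply, Matrix.of_apply, hGstar a b,
        Matrix.conjTranspose_apply, star_star]
    · ext ⟨i, a⟩ ⟨j, b⟩
      obtain ⟨c, hc⟩ := hGsc a b
      rw [hblock a b i j, Matrix.kroneckerMap_apply, Matrix.of_apply, hc,
        Matrix.smul_apply, Matrix.smul_apply, Matrix.one_apply_eq, smul_eq_mul,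
        smul_eq_mul, mul_one]
      ring
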